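/- Consider the CODER iteration as in the context with F satisfying the blockwise Lipschitz assumption with matrices Qⁱ and L² = ‖∑_{i=1}^m Q̂ⁱ‖. Then (one-step lower bound) for every u ∈ ℝ^d and every k ≥ 1: ψ_k(x_k; u) ≥ ψ_{k−1}(x_{k−1}; u) + ((1+γA_{k−1})/4)‖x_k − x_{k−1}‖² − (a_{k−1}²/(1+γA_{k−1}))‖F(x_{k−1}) − p_{k−1}‖² + a_k⟨p_k − F(x_k), x_k − u⟩ − a_{k−1}⟨p_{k−1} − F(x_{k−1}), x_{k−1} − u⟩ + a_k(⟨F(x_k), x_k − u⟩ + g(x_k) − g(u)), where the term with coefficient a_{k−1}²/(1+γA_{k−1}) is interpreted as 0 when k = 1 (since a₀ = 0 and p₀ = F(x₀)). -/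

import Mathlib

/-!
Writing `μ = 1 + γ A_k`, the function `ψ_k(·; u)` is `μ`-strongly convex (the regularizer
contributes `γ A_k`, the proximal term `1`) and is minimized at `x_k`, so
`ψ_k(x_{k+1}; u) ≥ ψ_k(x_k; u) + (μ/2)‖x_{k+1} − x_k‖²`. Passing to `ψ_{k+1}` adds
`a_{k+1}(⟪q_{k+1}, x_{k+1} − u⟫ + g(x_{k+1}) − g(u))`; splitting `q_{k+1}` into `p_{k+1}` and the
correction `(a_k / a_{k+1})(F(x_k) − p_k)` leaves the cross term
`a_k⟪F(x_k) − p_k, x_{k+1} − x_k⟫`, which Young's inequality absorbs into half of the quadratic gain.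
-/

open scoped RealInnerProductSpace

/-- Operator norm of a square real matrix, viewed as a linear map on Euclidean space. -/
noncomputable def matOpNorm {d : ℕ} (Q : Matrix (Fin d) (Fin d) ℝ) : ℝ :=
  ‖Matrix.toEuclideanCLM (𝕜 := ℝ) Q‖

/-- The quadratic form `vᵀ Q v` on Euclidean space. -/
noncomputable def quadForm {d : ℕ} (Q : Matrix (Fin d) (Fin d) ℝ)
    (v : EuclideanSpace ℝ (Fin d)) : ℝ :=
  ⟪v, Matrix.toEuclideanCLM (𝕜 := ℝ) Q v⟫

open Set Filter Topology

section ConvexAnalysis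

variable {E : Type*} [NormedAddCommGroup E] [InnerProductSpace ℝ E]

theorem StrongConvexOn.add_norm_sub_sq_le_of_isMinOn {s : Set E} {m : ℝ} {f : E → ℝ} {x y : E}
    (hf : StrongConvexOn s m f) (hmin : IsMinOn f s x) (hx : x ∈ s) (hy : y ∈ s) :
    f x + m / 2 * ‖y - x‖ ^ 2 ≤ f y := by
  have hnear : ∀ t ∈ Ioo (0 : ℝ) 1, f x + m / 2 * t * ‖y - x‖ ^ 2 ≤ f y := by
    rintro t ⟨ht0, ht1⟩
    have hconv := hf.2 hx hy ht0.le (sub_nonneg.2 ht1.le) (add_sub_cancel t 1)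
    have hle : f x ≤ f (t • x + (1 - t) • y) :=
      hmin (hf.1 hx hy ht0.le (sub_nonneg.2 ht1.le) (add_sub_cancel t 1))
    simp only [smul_eq_mul, norm_sub_rev x y] at hconv
    have : (1 - t) * (f x + m / 2 * t * ‖y - x‖ ^ 2) ≤ (1 - t) * f y := by linarith
    exact le_of_mul_le_mul_left this (sub_pos.2 ht1)
  have hlim : Tendsto (fun t => f x + m / 2 * t * ‖y - x‖ ^ 2) (𝓝[<] 1)
      (𝓝 (f x + m / 2 * 1 * ‖y - x‖ ^ 2)) :=
    (Continuous.tendsto (by fun_prop) 1).mono_left nhdsWithin_le_nhds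
  simpa using le_of_tendsto hlim (mem_of_superset (Ioo_mem_nhdsLT zero_lt_one) hnear)

theorem neg_sq_div_mul_norm_sq_sub_le_mul_inner (v w : E) (c : ℝ) {μ : ℝ} (hμ : 0 < μ) :
    -(c ^ 2 / μ) * ‖v‖ ^ 2 - μ / 4 * ‖w‖ ^ 2 ≤ c * ⟪v, w⟫ := by
  have hsq : c ^ 2 / μ * ‖v‖ ^ 2 + c * ⟪v, w⟫ + μ / 4 * ‖w‖ ^ 2
      = μ / 4 * ‖(2 * c / μ) • v + w‖ ^ 2 := by
    rw [norm_add_sq_real, norm_smul, real_inner_smul_left, mul_pow, Real.norm_eq_abs, sq_abs]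
    field_simp
    ring
  nlinarith [show 0 ≤ μ / 4 * ‖(2 * c / μ) • v + w‖ ^ 2 by positivity]

theorem StrongConvexOn.inner_add_mul_add_half_norm_sub_sq_add {G : E → ℝ} {γ A : ℝ}
    (hG : StrongConvexOn univ γ G) (hA : 0 ≤ A) (c y : E) (b : ℝ) :
    StrongConvexOn univ (1 + γ * A) fun z => ⟪c, z⟫ + A * G z + 1 / 2 * ‖z - y‖ ^ 2 + b := by
  rw [strongConvexOn_iff_convex] at hG ⊢
  have hconv : ConvexOn ℝ univ fun z =>
      ⟪c - y, z⟫ + A * (G z - γ / 2 * ‖z‖ ^ 2) + (1 / 2 * ‖y‖ ^ 2 + b) :=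
    (((innerSL ℝ (c - y)).toLinearMap.convexOn convex_univ).add (hG.smul hA)).add_const _
  refine hconv.congr fun z _ => ?_
  simp only [norm_sub_sq_real, inner_sub_left, real_inner_comm y z]
  ring

theorem strongConvexOn_sum_of_convexOn_sub_blockwise {ι κ : Type*} [Fintype ι] [Fintype κ]
    [DecidableEq κ] (blk : ι → κ) {γ : ℝ} (g : κ → EuclideanSpace ℝ ι → ℝ)
    (hg : ∀ i, ConvexOn ℝ univ fun z : EuclideanSpace ℝ ι =>
      g i z - γ / 2 * ∑ j ∈ Finset.univ.filter (fun j => blk j = i), (z j) ^ 2) :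
    StrongConvexOn univ γ fun z => ∑ i, g i z := by
  rw [strongConvexOn_iff_convex]
  have hsum : ConvexOn ℝ univ (∑ i, fun z : EuclideanSpace ℝ ι =>
      g i z - γ / 2 * ∑ j ∈ Finset.univ.filter (fun j => blk j = i), (z j) ^ 2) :=
    Finset.sum_induction _ (ConvexOn ℝ univ) (fun _ _ => ConvexOn.add)
      (convexOn_const 0 convex_univ) fun i _ => hg i
  refine hsum.congr fun z _ => ?_
  simp only [Finset.sum_apply, Finset.sum_sub_distrib, ← Finset.mul_sum, Finset.sum_fiberwise,
    EuclideanSpace.norm_sq_eq, Real.norm_eq_abs, sq_abs]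

end ConvexAnalysis

section Coder

variable {E : Type*} [NormedAddCommGroup E] [InnerProductSpace ℝ E] {γ L : ℝ} {a A : ℕ → ℝ}

theorem coder_A_nonneg (hγ : 0 ≤ γ) (hL : 0 < L) (hA0 : A 0 = 0)
    (ha : ∀ k, a (k + 1) = (1 + γ * A k) / (2 * L)) (hA : ∀ k, A (k + 1) = A k + a (k + 1)) :
    ∀ n, 0 ≤ A n
  | 0 => hA0.ge
  | n + 1 => by
    have := coder_A_nonneg hγ hL hA0 ha hA n
    rw [hA, ha]
    positivity

theorem coder_sum_a_eq_A (hA0 : A 0 = 0) (hA : ∀ k, A (k + 1) = A k + a (k + 1)) :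
    ∀ n, ∑ j ∈ Finset.Icc 1 n, a j = A n
  | 0 => by simp [hA0]
  | n + 1 => by rw [Finset.sum_Icc_succ_top (by omega), coder_sum_a_eq_A hA0 hA n, hA]

variable {G : E → ℝ} {x q : ℕ → E} {ψ : ℕ → E → E → ℝ}

theorem coder_psi_succ
    (hψ : ∀ k z u, ψ k z u = ∑ j ∈ Finset.Icc 1 k, a j * (⟪q j, z - u⟫ + G z - G u)
      + 1 / 2 * ‖z - x 0‖ ^ 2) (k : ℕ) (z u : E) :
    ψ (k + 1) z u = ψ k z u + a (k + 1) * (⟪q (k + 1), z - u⟫ + G z - G u) := by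
  rw [hψ, hψ, Finset.sum_Icc_succ_top (by omega)]
  ring

theorem coder_psi_strongConvexOn (hγ : 0 ≤ γ) (hL : 0 < L) (hG : StrongConvexOn univ γ G)
    (hA0 : A 0 = 0) (ha : ∀ k, a (k + 1) = (1 + γ * A k) / (2 * L))
    (hA : ∀ k, A (k + 1) = A k + a (k + 1))
    (hψ : ∀ k z u, ψ k z u = ∑ j ∈ Finset.Icc 1 k, a j * (⟪q j, z - u⟫ + G z - G u)
      + 1 / 2 * ‖z - x 0‖ ^ 2) (k : ℕ) (u : E) :
    StrongConvexOn univ (1 + γ * A k) (ψ k · u) := by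
  set c := ∑ j ∈ Finset.Icc 1 k, a j • q j
  have hψ_eq : (ψ k · u) = fun z => ⟪c, z⟫ + A k * G z + 1 / 2 * ‖z - x 0‖ ^ 2
      + (-⟪c, u⟫ - A k * G u) := by
    ext z
    rw [hψ, ← coder_sum_a_eq_A hA0 hA]
    simp only [c, sum_inner, real_inner_smul_left, inner_sub_right, Finset.sum_mul, mul_add,
      mul_sub, Finset.sum_add_distrib, Finset.sum_sub_distrib]
    ring
  rw [hψ_eq]
  exact hG.inner_add_mul_add_half_norm_sub_sq_add (coder_A_nonneg hγ hL hA0 ha hA k) c (x 0) _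

theorem coder_isMinOn_psi
    (hψ : ∀ k z u, ψ k z u = ∑ j ∈ Finset.Icc 1 k, a j * (⟪q j, z - u⟫ + G z - G u)
      + 1 / 2 * ‖z - x 0‖ ^ 2)
    (hxmin : ∀ k, 1 ≤ k → ∀ u z, ψ k (x k) u ≤ ψ k z u) (k : ℕ) (u : E) :
    IsMinOn (ψ k · u) univ (x k) := by
  intro z _
  show ψ k (x k) u ≤ ψ k z u
  rcases Nat.eq_zero_or_pos k with rfl | hk
  · simp only [hψ, Finset.Icc_eq_empty_of_lt zero_lt_one, Finset.sum_empty, sub_self, norm_zero,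
      zero_add, ne_eq, two_ne_zero, not_false_eq_true, zero_pow, mul_zero]
    positivity
  · exact hxmin k hk u z

theorem coder_psi_succ_lower_bound (F : E → E) (p : ℕ → E) (hγ : 0 ≤ γ) (hL : 0 < L)
    (hG : StrongConvexOn univ γ G) (hA0 : A 0 = 0)
    (ha : ∀ k, a (k + 1) = (1 + γ * A k) / (2 * L)) (hA : ∀ k, A (k + 1) = A k + a (k + 1))
    (hq : ∀ k, q (k + 1) = p (k + 1) + (a k / a (k + 1)) • (F (x k) - p k))
    (hψ : ∀ k z u, ψ k z u = ∑ j ∈ Finset.Icc 1 k, a j * (⟪q j, z - u⟫ + G z - G u)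
      + 1 / 2 * ‖z - x 0‖ ^ 2)
    (hxmin : ∀ k, 1 ≤ k → ∀ u z, ψ k (x k) u ≤ ψ k z u) (u : E) (k : ℕ) :
    ψ (k + 1) (x (k + 1)) u ≥
      ψ k (x k) u
      + (1 + γ * A k) / 4 * ‖x (k + 1) - x k‖ ^ 2
      - a k ^ 2 / (1 + γ * A k) * ‖F (x k) - p k‖ ^ 2
      + a (k + 1) * ⟪p (k + 1) - F (x (k + 1)), x (k + 1) - u⟫
      - a k * ⟪p k - F (x k), x k - u⟫
      + a (k + 1) * (⟪F (x (k + 1)), x (k + 1) - u⟫ + G (x (k + 1)) - G u) := by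
  have hμ : 0 < 1 + γ * A k := by
    have := coder_A_nonneg hγ hL hA0 ha hA k
    positivity
  have ha_succ : a (k + 1) ≠ 0 := by
    rw [ha]
    positivity
  have hgrowth := (coder_psi_strongConvexOn hγ hL hG hA0 ha hA hψ k u).add_norm_sub_sq_le_of_isMinOn
    (coder_isMinOn_psi hψ hxmin k u) (mem_univ _) (mem_univ (x (k + 1)))
  have hyoung := neg_sq_div_mul_norm_sq_sub_le_mul_inner (F (x k) - p k) (x (k + 1) - x k) (a k) hμ
  have hcorr : a (k + 1) * (a k / a (k + 1)) = a k := mul_div_cancel₀ _ ha_succ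
  rw [ge_iff_le, coder_psi_succ hψ, hq, inner_add_left, real_inner_smul_left]
  simp only [inner_sub_left, inner_sub_right] at hyoung ⊢
  linear_combination hgrowth + hyoung
    - (⟪F (x k), x (k + 1)⟫ - ⟪F (x k), u⟫ - ⟪p k, x (k + 1)⟫ + ⟪p k, u⟫) * hcorr

end Coder

theorem stmt10_general {d m : ℕ} (blk : Fin d → Fin m)
    (F : EuclideanSpace ℝ (Fin d) → EuclideanSpace ℝ (Fin d))
    (γ L : ℝ) (hγ : 0 ≤ γ) (hL : 0 < L)
    -- the block components of the separable regularizer g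
    (g : Fin m → EuclideanSpace ℝ (Fin d) → ℝ)
    (hgsc : ∀ i : Fin m, ConvexOn ℝ Set.univ (fun z : EuclideanSpace ℝ (Fin d) =>
      g i z - γ / 2 * ∑ j ∈ Finset.univ.filter (fun j => blk j = i), (z j) ^ 2))
    (G : EuclideanSpace ℝ (Fin d) → ℝ) (hG : ∀ z, G z = ∑ i, g i z)
    -- step sizes
    (a A : ℕ → ℝ) (hA0 : A 0 = 0)
    (ha : ∀ k : ℕ, a (k + 1) = (1 + γ * A k) / (2 * L))
    (hA : ∀ k : ℕ, A (k + 1) = A k + a (k + 1))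
    -- iterates, cyclic coordinate gradients, and extrapolated gradients
    (x p q : ℕ → EuclideanSpace ℝ (Fin d))
    (hq : ∀ (k : ℕ) (j : Fin d),
      q (k + 1) j = p (k + 1) j + a k / a (k + 1) * (F (x k) j - p k j))
    -- estimation sequence and its minimization property
    (ψ : ℕ → EuclideanSpace ℝ (Fin d) → EuclideanSpace ℝ (Fin d) → ℝ)
    (hψ : ∀ (k : ℕ) (z u : EuclideanSpace ℝ (Fin d)),
      ψ k z u = ∑ j ∈ Finset.Icc 1 k, a j * (⟪q j, z - u⟫ + G z - G u)
        + 1 / 2 * ‖z - x 0‖ ^ 2)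
    (hxmin : ∀ k : ℕ, 1 ≤ k → ∀ u z : EuclideanSpace ℝ (Fin d), ψ k (x k) u ≤ ψ k z u) :
    ∀ (u : EuclideanSpace ℝ (Fin d)) (k : ℕ),
      ψ (k + 1) (x (k + 1)) u ≥
        ψ k (x k) u
        + (1 + γ * A k) / 4 * ‖x (k + 1) - x k‖ ^ 2
        - a k ^ 2 / (1 + γ * A k) * ‖F (x k) - p k‖ ^ 2
        + a (k + 1) * ⟪p (k + 1) - F (x (k + 1)), x (k + 1) - u⟫
        - a k * ⟪p k - F (x k), x k - u⟫
        + a (k + 1) * (⟪F (x (k + 1)), x (k + 1) - u⟫ + G (x (k + 1)) - G u) := by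
  have hGsc : StrongConvexOn univ γ G := by
    rw [show G = fun z => ∑ i, g i z from funext hG]
    exact strongConvexOn_sum_of_convexOn_sub_blockwise blk g hgsc
  have hq' : ∀ k, q (k + 1) = p (k + 1) + (a k / a (k + 1)) • (F (x k) - p k) := fun k => by
    ext j
    simp only [PiLp.add_apply, PiLp.smul_apply, PiLp.sub_apply, smul_eq_mul, hq]
  exact coder_psi_succ_lower_bound F p hγ hL hGsc hA0 ha hA hq' hψ hxmin

/-- **Statement 10** (one-step lower bound for the CODER estimation sequence).
Under the CODER iteration, with `F` satisfying the blockwise Lipschitz assumption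
with PSD matrices `Qⁱ` and `L² = ‖∑ᵢ Q̂ⁱ‖`, for every `u` and every `k ≥ 1`
(stated below with `k ≥ 1` replaced by the index shift `k ↦ k+1`):
`ψ_k(x_k; u) ≥ ψ_{k−1}(x_{k−1}; u) + ((1+γA_{k−1})/4)‖x_k − x_{k−1}‖²
  − (a_{k−1}²/(1+γA_{k−1}))‖F(x_{k−1}) − p_{k−1}‖²
  + a_k⟨p_k − F(x_k), x_k − u⟩ − a_{k−1}⟨p_{k−1} − F(x_{k−1}), x_{k−1} − u⟩
  + a_k(⟨F(x_k), x_k − u⟩ + g(x_k) − g(u))`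
(the term with coefficient `a_{k−1}²/(1+γA_{k−1})` vanishes for `k = 1` since
`a₀ = 0`). -/
theorem stmt10 {d m : ℕ} (blk : Fin d → Fin m) (hblk : Monotone blk)
    (F : EuclideanSpace ℝ (Fin d) → EuclideanSpace ℝ (Fin d))
    (γ L : ℝ) (hγ : 0 ≤ γ) (hL : 0 < L)
    -- blockwise Lipschitz assumption
    (Q : Fin m → Matrix (Fin d) (Fin d) ℝ)
    (hpsd : ∀ i, (Q i).PosSemidef)
    (hlip : ∀ (i : Fin m) (z w : EuclideanSpace ℝ (Fin d)),
      ∑ j ∈ Finset.univ.filter (fun j => blk j = i), (F z j - F w j) ^ 2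
        ≤ quadForm (Q i) (z - w))
    (Qhat : Fin m → Matrix (Fin d) (Fin d) ℝ)
    (hQhat : ∀ (i : Fin m) (j k : Fin d),
      Qhat i j k = if i ≤ blk j ∧ i ≤ blk k then Q i j k else 0)
    (hL2 : L ^ 2 = matOpNorm (∑ i, Qhat i))
    -- the block components of the separable regularizer g
    (g : Fin m → EuclideanSpace ℝ (Fin d) → ℝ)
    (hgdep : ∀ (i : Fin m) (z w : EuclideanSpace ℝ (Fin d)),
      (∀ j, blk j = i → z j = w j) → g i z = g i w)
    (hgsc : ∀ i : Fin m, ConvexOn ℝ Set.univ (fun z : EuclideanSpace ℝ (Fin d) =>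
      g i z - γ / 2 * ∑ j ∈ Finset.univ.filter (fun j => blk j = i), (z j) ^ 2))
    (G : EuclideanSpace ℝ (Fin d) → ℝ) (hG : ∀ z, G z = ∑ i, g i z)
    -- step sizes
    (a A : ℕ → ℝ) (ha0 : a 0 = 0) (hA0 : A 0 = 0)
    (ha : ∀ k : ℕ, a (k + 1) = (1 + γ * A k) / (2 * L))
    (hA : ∀ k : ℕ, A (k + 1) = A k + a (k + 1))
    -- iterates, cyclic coordinate gradients, and extrapolated gradients
    (x p q : ℕ → EuclideanSpace ℝ (Fin d))
    (hp0 : p 0 = F (x 0))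
    (hp : ∀ (k : ℕ) (j : Fin d),
      p (k + 1) j = F (WithLp.toLp 2 (fun j' => if blk j' < blk j then x (k + 1) j' else x k j')) j)
    (hq : ∀ (k : ℕ) (j : Fin d),
      q (k + 1) j = p (k + 1) j + a k / a (k + 1) * (F (x k) j - p k j))
    -- estimation sequence and its minimization property
    (ψ : ℕ → EuclideanSpace ℝ (Fin d) → EuclideanSpace ℝ (Fin d) → ℝ)
    (hψ : ∀ (k : ℕ) (z u : EuclideanSpace ℝ (Fin d)),
      ψ k z u = ∑ j ∈ Finset.Icc 1 k, a j * (⟪q j, z - u⟫ + G z - G u)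
        + 1 / 2 * ‖z - x 0‖ ^ 2)
    (hxmin : ∀ k : ℕ, 1 ≤ k → ∀ u z : EuclideanSpace ℝ (Fin d), ψ k (x k) u ≤ ψ k z u) :
    ∀ (u : EuclideanSpace ℝ (Fin d)) (k : ℕ),
      ψ (k + 1) (x (k + 1)) u ≥
        ψ k (x k) u
        + (1 + γ * A k) / 4 * ‖x (k + 1) - x k‖ ^ 2
        - a k ^ 2 / (1 + γ * A k) * ‖F (x k) - p k‖ ^ 2
        + a (k + 1) * ⟪p (k + 1) - F (x (k + 1)), x (k + 1) - u⟫
        - a k * ⟪p k - F (x k), x k - u⟫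
        + a (k + 1) * (⟪F (x (k + 1)), x (k + 1) - u⟫ + G (x (k + 1)) - G u) :=
  stmt10_general blk F γ L hγ hL g hgsc G hG a A hA0 ha hA x p q hq ψ hψ hxmin
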